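/- Let (H,L) be a dynamical base, χ an invariant character of L, A a unital dynamical algebra over (H,L), B=A⋊L, and B^L_χ={b∈B : ι_χ(λ)▷b=χ(λ)b for all λ∈L} (a subalgebra of B, where H acts on B as an H-module algebra). Then the restriction of the projection ℘_χ:B→A_χ, which evaluates χ on the L-factor of the factorization B=A·L, defines a surjective homomorphism of H-algebras B^L_χ→(A^L_χ,⋆_χ), and through this homomorphism ℘_χ:B→A_χ is a homomorphism of right B^L_χ-modules. -/

import Mathlib

/- Preliminaries: dynamical bases (Hopf algebra H, base algebra L) following Mudrov,
"On dynamical smash product". -/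

noncomputable section
open TensorProduct LinearMap

namespace Dyn

variable (k : Type*) [Field k]
variable (H : Type*) [Ring H] [HopfAlgebra k H]
variable (L : Type*) [Ring L] [Algebra k L]

/-- The "diagonal" action of `H` on a tensor product of two `H`-modules,
`h ⊗ (a ⊗ b) ↦ (h⁽¹⁾ ▷ a) ⊗ (h⁽²⁾ ▷ b)`, where the actions are given in
uncurried form `H ⊗ A → A`, `H ⊗ B → B`. -/
def diagAct {A B : Type*} [AddCommGroup A] [Module k A] [AddCommGroup B] [Module k B]
    (fA : H ⊗[k] A →ₗ[k] A) (fB : H ⊗[k] B →ₗ[k] B) :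
    H ⊗[k] (A ⊗[k] B) →ₗ[k] A ⊗[k] B :=
  TensorProduct.map fA fB
    ∘ₗ (tensorTensorTensorComm k H H A B).toLinearMap
    ∘ₗ rTensor (A ⊗[k] B) (Coalgebra.comul (R := k) (A := H))

/-- The right-hand side of the Yetter-Drinfeld compatibility condition
`h ⊗ λ ↦ h⁽¹⁾ λ⁽¹⁾ γ(h⁽³⁾) ⊗ (h⁽²⁾ ▷ λ^[∞])`, as a linear map `H ⊗ L → H ⊗ L`,
built from an action `act` and a coaction `coact`. -/
def ydRHS (act : H →ₗ[k] L →ₗ[k] L) (coact : L →ₗ[k] H ⊗[k] L) :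
    H ⊗[k] L →ₗ[k] H ⊗[k] L :=
  rTensor L (LinearMap.mul' k H)
    ∘ₗ (TensorProduct.assoc k H H L).symm.toLinearMap
    ∘ₗ TensorProduct.map (LinearMap.mul' k H)
        (TensorProduct.map (HopfAlgebra.antipode (R := k)) (TensorProduct.lift act)
          ∘ₗ (TensorProduct.assoc k H H L).toLinearMap
          ∘ₗ rTensor L (TensorProduct.comm k H H).toLinearMap)
    ∘ₗ (tensorTensorTensorComm k H (H ⊗[k] H) H L).toLinearMap
    ∘ₗ TensorProduct.map
        (lTensor H (Coalgebra.comul (R := k) (A := H)) ∘ₗ Coalgebra.comul (R := k))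
        coact

/-- A base algebra `L` over a Hopf algebra `H` (so `(H, L)` is a dynamical base):
`L` is a left `H`-module algebra, a left `H`-comodule algebra, the action and coaction
satisfy the Yetter-Drinfeld condition, and `L` is braided commutative. -/
structure BaseAlgebra : Type _ where
  /-- the left action of `H` on `L` -/
  act : H →ₗ[k] L →ₗ[k] L
  /-- the left coaction of `H` on `L` -/
  coact : L →ₗ[k] H ⊗[k] L
  act_mul_act : ∀ (h h' : H) (l : L), act (h * h') l = act h (act h' l)
  act_one_act : ∀ l : L, act 1 l = l
  /-- `L` is an `H`-module algebra: `h ▷ (λμ) = (h⁽¹⁾ ▷ λ)(h⁽²⁾ ▷ μ)` -/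
  moduleAlgebra :
    TensorProduct.lift act ∘ₗ lTensor H (LinearMap.mul' k L) =
      LinearMap.mul' k L ∘ₗ diagAct k H (TensorProduct.lift act) (TensorProduct.lift act)
  /-- `h ▷ 1 = ε(h) 1` -/
  act_unit : ∀ h : H, act h 1 = Coalgebra.counit (R := k) h • (1 : L)
  /-- coassociativity of the coaction -/
  coassoc :
    rTensor L (Coalgebra.comul (R := k) (A := H)) ∘ₗ coact =
      (TensorProduct.assoc k H H L).symm.toLinearMap ∘ₗ lTensor H coact ∘ₗ coact
  /-- counit property of the coaction -/
  counit_coact :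
    ∀ l : L, (TensorProduct.lid k L)
      (rTensor L (Coalgebra.counit (R := k) (A := H)) (coact l)) = l
  /-- `L` is an `H`-comodule algebra: the coaction is an algebra map -/
  coact_mul : ∀ l m : L, coact (l * m) = coact l * coact m
  coact_one : coact 1 = 1
  /-- the Yetter-Drinfeld compatibility condition -/
  yd : coact ∘ₗ TensorProduct.lift act = ydRHS k H L act coact
  /-- braided commutativity: `λμ = (λ⁽¹⁾ ▷ μ) λ^[∞]` -/
  braided :
    LinearMap.mul' k L =
      LinearMap.mul' k L ∘ₗ rTensor L (TensorProduct.lift act)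
        ∘ₗ (TensorProduct.assoc k H L L).symm.toLinearMap
        ∘ₗ lTensor H (TensorProduct.comm k L L).toLinearMap
        ∘ₗ (TensorProduct.assoc k H L L).toLinearMap
        ∘ₗ rTensor L coact

variable {k H L}

/-- An invariant character of the base algebra `L`: a unital algebra homomorphism
`L → k` with `χ(h ▷ λ) = ε(h) χ(λ)`. -/
def BaseAlgebra.IsInvChar (B : BaseAlgebra k H L) (χ : L →ₐ[k] k) : Prop :=
  ∀ (h : H) (l : L), χ (B.act h l) = Coalgebra.counit (R := k) h * χ l

/-- `e ∈ L` is a left `χ`-generator: `λ e = χ(λ) e` for all `λ`. -/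
def IsLeftGen (χ : L →ₐ[k] k) (e : L) : Prop := ∀ l : L, l * e = χ l • e

/-- `e ∈ L` is a right `χ`-generator: `e λ = χ(λ) e` for all `λ`. -/
def IsRightGen (χ : L →ₐ[k] k) (e : L) : Prop := ∀ l : L, e * l = χ l • e

/-- The homomorphism `ι_χ : L → H`, `λ ↦ λ⁽¹⁾ χ(λ^[∞])`, associated to a character. -/
def BaseAlgebra.iota (B : BaseAlgebra k H L) (χ : L →ₗ[k] k) : L →ₗ[k] H :=
  (TensorProduct.rid k H).toLinearMap ∘ₗ lTensor H χ ∘ₗ B.coact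

/-- Evaluation of a functional `η ∈ H^*` against the first leg of the coaction:
`λ ↦ ⟨η, λ⁽¹⁾⟩ λ^[∞]`.  This is the action of `H^*_op ⊂ D(H)` on `L`. -/
def BaseAlgebra.coactEval (B : BaseAlgebra k H L) (η : H →ₗ[k] k) : L →ₗ[k] L :=
  (TensorProduct.lid k L).toLinearMap ∘ₗ rTensor L η ∘ₗ B.coact

/-- The adjoint character `χ̃ : λ ↦ χ(ϑ̄ ▷ λ)` of a character `χ`, where
`ϑ̄ = Σᵢ ηⁱ γ(hᵢ)` is the inverse Drinfeld element of the double, computed with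
respect to a basis `b` of `H`: `χ̃(λ) = Σᵢ ⟨ηⁱ, (γ(hᵢ) ▷ λ)⁽¹⁾⟩ χ((γ(hᵢ) ▷ λ)^[∞])`. -/
def BaseAlgebra.adjChar (B : BaseAlgebra k H L) (χ : L →ₗ[k] k)
    {ι : Type*} [Fintype ι] [DecidableEq ι] (b : Module.Basis ι k H) : L →ₗ[k] k :=
  ∑ i : ι, χ ∘ₗ B.coactEval (b.coord i) ∘ₗ B.act (HopfAlgebra.antipode (R := k) (b i))

end Dyn

namespace Dyn

open TensorProduct LinearMap

variable {k : Type*} [Field k] {H : Type*} [Ring H] [HopfAlgebra k H]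
variable {L : Type*} [Ring L] [Algebra k L]
variable {A : Type*} [AddCommGroup A] [Module k A]

/-- The equivariant permutation `τ : L ⊗ A → A ⊗ L`, `λ ⊗ a ↦ (λ⁽¹⁾ ▷ a) ⊗ λ^[∞]`,
for an `H`-module `A` with action `act`. -/
def tau (B : BaseAlgebra k H L) (act : H →ₗ[k] A →ₗ[k] A) :
    L ⊗[k] A →ₗ[k] A ⊗[k] L :=
  rTensor L (TensorProduct.lift act)
    ∘ₗ (TensorProduct.assoc k H A L).symm.toLinearMap
    ∘ₗ lTensor H (TensorProduct.comm k L A).toLinearMap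
    ∘ₗ (TensorProduct.assoc k H L A).toLinearMap
    ∘ₗ rTensor A B.coact

variable (B : BaseAlgebra k H L)

/-- A dynamical algebra over the dynamical base `(H, L)`: a left `H`-module `A`
with an `H`-equivariant multiplication `∗ : A ⊗ A → A ⊗ L` satisfying the shifted
associativity condition. -/
structure DynAlgebra (A : Type*) [AddCommGroup A] [Module k A] where
  /-- the `H`-action on `A` -/
  act : H →ₗ[k] A →ₗ[k] A
  act_mul_act : ∀ (h h' : H) (a : A), act (h * h') a = act h (act h' a)
  act_one_act : ∀ a : A, act 1 a = a
  /-- the dynamical multiplication `∗ : A ⊗ A → A ⊗ L` -/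
  mul : A ⊗[k] A →ₗ[k] A ⊗[k] L
  /-- `H`-equivariance of the multiplication -/
  equivariant :
    mul ∘ₗ diagAct k H (TensorProduct.lift act) (TensorProduct.lift act) =
      diagAct k H (TensorProduct.lift act) (TensorProduct.lift B.act) ∘ₗ lTensor H mul
  /-- shifted associativity -/
  shifted_assoc :
    lTensor A (LinearMap.mul' k L) ∘ₗ (TensorProduct.assoc k A L L).toLinearMap
      ∘ₗ rTensor L mul ∘ₗ (TensorProduct.assoc k A A L).symm.toLinearMap
      ∘ₗ lTensor A (tau B act)
      ∘ₗ (TensorProduct.assoc k A L A).toLinearMap ∘ₗ rTensor A mul =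
    lTensor A (LinearMap.mul' k L) ∘ₗ (TensorProduct.assoc k A L L).toLinearMap
      ∘ₗ rTensor L mul ∘ₗ (TensorProduct.assoc k A A L).symm.toLinearMap
      ∘ₗ lTensor A mul ∘ₗ (TensorProduct.assoc k A A A).toLinearMap

/-- A unital dynamical algebra: `1_A ∗ a = a ∗ 1_A = a ⊗ 1_L`. -/
structure UnitalDynAlgebra (A : Type*) [AddCommGroup A] [Module k A] extends
    DynAlgebra B A where
  one : A
  mul_one' : ∀ a : A, mul (a ⊗ₜ[k] one) = a ⊗ₜ[k] (1 : L)
  one_mul' : ∀ a : A, mul (one ⊗ₜ[k] a) = a ⊗ₜ[k] (1 : L)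
  /-- the unit is `H`-invariant -/
  act_unit : ∀ h : H, act h one = Coalgebra.counit (R := k) h • one

variable {B}

/-- The multiplication of the dynamical smash product `B = A ⋊ L` on `A ⊗ L`:
`(a ⊗ λ)(b ⊗ μ) = (a ⋆₁ (λ⁽¹⁾ ▷ b)) ⊗ ρ₁ λ^[∞] μ`. -/
def DynAlgebra.smashMul (D : DynAlgebra B A) :
    (A ⊗[k] L) ⊗[k] (A ⊗[k] L) →ₗ[k] A ⊗[k] L :=
  lTensor A (LinearMap.mul' k L)
    ∘ₗ (TensorProduct.assoc k A L L).toLinearMap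
    ∘ₗ rTensor L D.mul
    ∘ₗ (TensorProduct.assoc k A A L).symm.toLinearMap
    ∘ₗ lTensor A (lTensor A (LinearMap.mul' k L))
    ∘ₗ lTensor A (TensorProduct.assoc k A L L).toLinearMap
    ∘ₗ lTensor A (rTensor L (tau B D.act))
    ∘ₗ lTensor A (TensorProduct.assoc k L A L).symm.toLinearMap
    ∘ₗ (TensorProduct.assoc k A L (A ⊗[k] L)).toLinearMap

/-- The `H`-action on the smash product `B = A ⊗ L` (diagonal action). -/
def DynAlgebra.actB (D : DynAlgebra B A) :
    H ⊗[k] (A ⊗[k] L) →ₗ[k] A ⊗[k] L :=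
  diagAct k H (TensorProduct.lift D.act) (TensorProduct.lift B.act)

/-- The embedding `A → A ⊗ L`, `a ↦ a ⊗ 1_L`. -/
def embA : A →ₗ[k] A ⊗[k] L := (TensorProduct.mk k A L).flip 1

/-- The embedding `L → A ⊗ L`, `λ ↦ 1_A ⊗ λ`, for a unital dynamical algebra. -/
def UnitalDynAlgebra.embL (D : UnitalDynAlgebra B A) : L →ₗ[k] A ⊗[k] L :=
  TensorProduct.mk k A L D.one

/-- Evaluation of a functional `χ` on the (right) `L`-factor of `B = A·L`:
`a ⊗ λ ↦ χ(λ) a`. -/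
def projR (χ : L →ₗ[k] k) : A ⊗[k] L →ₗ[k] A :=
  (TensorProduct.rid k A).toLinearMap ∘ₗ lTensor A χ

/-- Evaluation of a functional `ξ` on the left `L`-factor of `B = L·A`:
`a ⊗ λ = λ^[∞]·(γ̄(λ⁽¹⁾) ▷ a) ↦ ξ(λ^[∞]) (γ̄(λ⁽¹⁾) ▷ a)`, where `γ̄ = γinv` is the
inverse of the antipode. -/
def projL (B : BaseAlgebra k H L) (act : H →ₗ[k] A →ₗ[k] A)
    (γinv : H →ₗ[k] H) (ξ : L →ₗ[k] k) : A ⊗[k] L →ₗ[k] A :=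
  TensorProduct.lift act
    ∘ₗ rTensor A γinv
    ∘ₗ (TensorProduct.comm k A H).toLinearMap
    ∘ₗ lTensor A (TensorProduct.rid k H).toLinearMap
    ∘ₗ lTensor A (lTensor H ξ)
    ∘ₗ lTensor A B.coact

/-- The operation `⋆_χ` on `A`: `a ⋆_χ b = (id ⊗ χ)(a ∗ b)`. -/
def DynAlgebra.opStar (D : DynAlgebra B A) (χ : L →ₗ[k] k) : A ⊗[k] A →ₗ[k] A :=
  projR χ ∘ₗ D.mul

/-- The operation `⊛_ξ` on `A`: `a ⊛_ξ b = ξ(ℓ₁)(a •₁ b)` where `a ∗ b = ℓ₁ (a •₁ b)`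
is the presentation of the dynamical product with the `L`-factor on the left. -/
def DynAlgebra.opDia (D : DynAlgebra B A) (γinv : H →ₗ[k] H) (ξ : L →ₗ[k] k) :
    A ⊗[k] A →ₗ[k] A :=
  projL B D.act γinv ξ ∘ₗ D.mul

/-- The subspace `A^L_χ = {a ∈ A : ι_χ(λ) ▷ a = χ(λ) a for all λ ∈ L}`. -/
def DynAlgebra.ALχ (D : DynAlgebra B A) (χ : L →ₗ[k] k) : Set A :=
  {a : A | ∀ l : L, D.act (B.iota χ l) a = χ l • a}

/-- The subspace of `H`-invariants `A^H = {a : h ▷ a = ε(h) a}`. -/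
def DynAlgebra.AH (D : DynAlgebra B A) : Set A :=
  {a : A | ∀ h : H, D.act h a = Coalgebra.counit (R := k) h • a}

/-- The left action of the smash product `B` on the induced module `A_χ = B ⊗_L k_χ`
(with underlying space `A`): `b · x = ℘_χ(b (x ⊗ 1))`. -/
def DynAlgebra.lactB (D : DynAlgebra B A) (χ : L →ₗ[k] k) :
    (A ⊗[k] L) ⊗[k] A →ₗ[k] A :=
  projR χ ∘ₗ D.smashMul ∘ₗ lTensor (A ⊗[k] L) embA

/-- The right action of the smash product `B` on the induced module
`_ξA = k_ξ ⊗_L B` (with underlying space `A`): `x · b = _ξ℘((x ⊗ 1) b)`. -/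
def DynAlgebra.ractB (D : DynAlgebra B A) (γinv : H →ₗ[k] H) (ξ : L →ₗ[k] k) :
    A ⊗[k] (A ⊗[k] L) →ₗ[k] A :=
  projL B D.act γinv ξ ∘ₗ D.smashMul ∘ₗ rTensor (A ⊗[k] L) embA

end Dyn

namespace Dyn

open TensorProduct LinearMap

variable {k : Type*} [Field k] {H : Type*} [Ring H] [HopfAlgebra k H]
variable {L : Type*} [Ring L] [Algebra k L]
variable {A : Type*} [AddCommGroup A] [Module k A]

/-- The subspace `B^L_χ = {b ∈ B : ι_χ(λ) ▷ b = χ(λ) b for all λ ∈ L}` of the smash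
product `B = A ⋊ L`, where `H` acts on `B` by the (diagonal) module-algebra action. -/
def DynAlgebra.BLχ {B : BaseAlgebra k H L} (D : DynAlgebra B A)
    (χ : L →ₗ[k] k) : Set (A ⊗[k] L) :=
  {p : A ⊗[k] L | ∀ l : L, D.actB (B.iota χ l ⊗ₜ[k] p) = χ l • p}

/-!
Since `χ` is `H`-invariant, `℘_χ` is `H`-equivariant. Moving `λ` past `q` through the
coaction shows `℘_χ((a ⊗ λ) q) = a ⋆_χ (ι_χ(λ) ▷ ℘_χ(q))`; for `q ∈ B^L_χ`
equivariance turns `ι_χ(λ) ▷ ℘_χ(q)` into `χ(λ) ℘_χ(q)`, which gives multiplicativity and right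
`B^L_χ`-linearity at once. Surjectivity onto `A^L_χ` is witnessed by `a ↦ a ⊗ 1`.
-/

section ProjR

variable {B : BaseAlgebra k H L} (D : DynAlgebra B A) (χ : L →ₐ[k] k)

@[simp]
lemma projR_tmul (ξ : L →ₗ[k] k) (a : A) (l : L) : projR ξ (a ⊗ₜ[k] l) = ξ l • a := by
  simp [projR]

lemma projR_map_lift_tensorTensorTensorComm (hχ : B.IsInvChar χ) (a : A) (l : L)
    (c : H ⊗[k] H) :
    projR χ.toLinearMap (TensorProduct.map (TensorProduct.lift D.act) (TensorProduct.lift B.act)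
        (tensorTensorTensorComm k H H A L (c ⊗ₜ[k] (a ⊗ₜ[k] l)))) =
      χ l • D.act (TensorProduct.rid k H (lTensor H (Coalgebra.counit (R := k)) c)) a := by
  induction c using TensorProduct.induction_on with
  | zero => simp
  | tmul x y =>
    simp only [tensorTensorTensorComm_tmul, map_tmul, lift.tmul, projR_tmul, lTensor_tmul,
      rid_tmul, map_smul, LinearMap.smul_apply, AlgHom.toLinearMap_apply, hχ y l, mul_smul]
    exact smul_comm _ _ _
  | add c₁ c₂ ih₁ ih₂ => simp only [add_tmul, map_add, ih₁, ih₂, LinearMap.add_apply, smul_add]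

lemma rid_lTensor_counit_comul (h : H) :
    TensorProduct.rid k H (lTensor H (Coalgebra.counit (R := k)) (Coalgebra.comul h)) = h := by
  simp [Coalgebra.lTensor_counit_comul]

lemma projR_actB (hχ : B.IsInvChar χ) (h : H) (p : A ⊗[k] L) :
    projR χ.toLinearMap (D.actB (h ⊗ₜ[k] p)) = D.act h (projR χ.toLinearMap p) := by
  induction p using TensorProduct.induction_on with
  | zero => simp
  | tmul a l =>
    simp only [DynAlgebra.actB, diagAct, coe_comp, Function.comp_apply, LinearEquiv.coe_coe,
      rTensor_tmul, projR_map_lift_tensorTensorTensorComm D χ hχ, rid_lTensor_counit_comul,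
      projR_tmul, map_smul, AlgHom.toLinearMap_apply]
  | add p₁ p₂ ih₁ ih₂ => simp only [tmul_add, map_add, ih₁, ih₂]

lemma actB_tmul_one (h : H) (a : A) :
    D.actB (h ⊗ₜ[k] (a ⊗ₜ[k] (1 : L))) = D.act h a ⊗ₜ[k] (1 : L) := by
  suffices ∀ c : H ⊗[k] H,
      TensorProduct.map (TensorProduct.lift D.act) (TensorProduct.lift B.act)
        (tensorTensorTensorComm k H H A L (c ⊗ₜ[k] (a ⊗ₜ[k] (1 : L)))) =
      D.act (TensorProduct.rid k H (lTensor H (Coalgebra.counit (R := k)) c)) a ⊗ₜ[k] (1 : L) by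
    simp only [DynAlgebra.actB, diagAct, coe_comp, Function.comp_apply, LinearEquiv.coe_coe,
      rTensor_tmul, this, rid_lTensor_counit_comul]
  intro c
  induction c using TensorProduct.induction_on with
  | zero => simp
  | tmul x y =>
    simp only [tensorTensorTensorComm_tmul, map_tmul, lift.tmul, lTensor_tmul, rid_tmul,
      map_smul, LinearMap.smul_apply, B.act_unit y, tmul_smul, smul_tmul']
  | add c₁ c₂ ih₁ ih₂ => simp only [add_tmul, map_add, ih₁, ih₂, LinearMap.add_apply]

lemma projR_tau (l : L) (a : A) :
    projR χ.toLinearMap (tau B D.act (l ⊗ₜ[k] a)) = D.act (B.iota χ.toLinearMap l) a := by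
  suffices ∀ d : H ⊗[k] L,
      projR χ.toLinearMap (rTensor L (TensorProduct.lift D.act) ((TensorProduct.assoc k H A L).symm
        (lTensor H (TensorProduct.comm k L A) (TensorProduct.assoc k H L A (d ⊗ₜ[k] a))))) =
      D.act (TensorProduct.rid k H (lTensor H χ.toLinearMap d)) a from this (B.coact l)
  intro d
  induction d using TensorProduct.induction_on with
  | zero => simp
  | tmul h m =>
    simp only [TensorProduct.assoc_tmul, lTensor_tmul, LinearEquiv.coe_coe,
      TensorProduct.comm_tmul, assoc_symm_tmul, rTensor_tmul, lift.tmul, projR_tmul, rid_tmul,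
      map_smul, LinearMap.smul_apply]
  | add d₁ d₂ ih₁ ih₂ => simp only [add_tmul, map_add, ih₁, ih₂, LinearMap.add_apply]

/-- The left-hand sides here and in `projR_mul_left` are the products `e μ` and `(a ⊗ 1) s` in
`B`, in the shape in which they occur inside `smashMul`. -/
lemma projR_mul_right (e : A ⊗[k] L) (μ : L) :
    projR χ.toLinearMap (lTensor A (LinearMap.mul' k L) (TensorProduct.assoc k A L L (e ⊗ₜ[k] μ))) =
      χ μ • projR χ.toLinearMap e := by
  induction e using TensorProduct.induction_on with
  | zero => simp
  | tmul b l =>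
    simp only [TensorProduct.assoc_tmul, lTensor_tmul, mul'_apply, projR_tmul,
      AlgHom.toLinearMap_apply, map_mul, mul_comm (χ l), mul_smul]
  | add e₁ e₂ ih₁ ih₂ => simp only [add_tmul, map_add, ih₁, ih₂, smul_add]

lemma projR_mul_left (a : A) (s : A ⊗[k] L) :
    projR χ.toLinearMap (lTensor A (LinearMap.mul' k L) (TensorProduct.assoc k A L L
        (rTensor L D.mul ((TensorProduct.assoc k A A L).symm (a ⊗ₜ[k] s))))) =
      D.opStar χ.toLinearMap (a ⊗ₜ[k] projR χ.toLinearMap s) := by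
  induction s using TensorProduct.induction_on with
  | zero => simp
  | tmul b l =>
    simp only [assoc_symm_tmul, rTensor_tmul, projR_mul_right, projR_tmul, DynAlgebra.opStar,
      coe_comp, Function.comp_apply, tmul_smul, map_smul, AlgHom.toLinearMap_apply]
  | add s₁ s₂ ih₁ ih₂ => simp only [tmul_add, map_add, ih₁, ih₂]

lemma projR_smashMul_tmul (a : A) (l : L) (q : A ⊗[k] L) :
    projR χ.toLinearMap (D.smashMul ((a ⊗ₜ[k] l) ⊗ₜ[k] q)) =
      D.opStar χ.toLinearMap
        (a ⊗ₜ[k] D.act (B.iota χ.toLinearMap l) (projR χ.toLinearMap q)) := by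
  induction q using TensorProduct.induction_on with
  | zero => simp
  | tmul b μ =>
    simp only [DynAlgebra.smashMul, coe_comp, Function.comp_apply, LinearEquiv.coe_coe,
      TensorProduct.assoc_tmul, lTensor_tmul, assoc_symm_tmul, rTensor_tmul, projR_mul_left,
      projR_mul_right, projR_tau, projR_tmul, map_smul, tmul_smul, AlgHom.toLinearMap_apply]
  | add q₁ q₂ ih₁ ih₂ => simp only [tmul_add, map_add, ih₁, ih₂]

end ProjR

section Invariants

variable {B : BaseAlgebra k H L} (D : DynAlgebra B A) {χ : L →ₐ[k] k}

lemma projR_mem_ALχ (hχ : B.IsInvChar χ) {p : A ⊗[k] L} (hp : p ∈ D.BLχ χ.toLinearMap) :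
    projR χ.toLinearMap p ∈ D.ALχ χ.toLinearMap := fun l => by
  rw [← projR_actB D χ hχ, hp l, map_smul]

lemma tmul_one_mem_BLχ {a : A} (ha : a ∈ D.ALχ χ.toLinearMap) :
    a ⊗ₜ[k] (1 : L) ∈ D.BLχ χ.toLinearMap := fun l => by
  rw [actB_tmul_one, ha l, smul_tmul']

lemma projR_smashMul_of_mem_BLχ (hχ : B.IsInvChar χ) (p : A ⊗[k] L) {q : A ⊗[k] L}
    (hq : q ∈ D.BLχ χ.toLinearMap) :
    projR χ.toLinearMap (D.smashMul (p ⊗ₜ[k] q)) =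
      D.opStar χ.toLinearMap (projR χ.toLinearMap p ⊗ₜ[k] projR χ.toLinearMap q) := by
  induction p using TensorProduct.induction_on with
  | zero => simp
  | tmul a l =>
    rw [projR_smashMul_tmul, ← projR_actB D χ hχ, hq l, map_smul, projR_tmul, tmul_smul,
      ← smul_tmul']
  | add p₁ p₂ ih₁ ih₂ => simp only [add_tmul, map_add, ih₁, ih₂]

end Invariants

/-- The restriction of the projection `℘_χ : B → A_χ` (evaluating `χ`
on the `L`-factor of `B = A·L`) to `B^L_χ` defines a surjective homomorphism of
`H`-algebras `B^L_χ → (A^L_χ, ⋆_χ)`, and through it `℘_χ` is a homomorphism of right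
`B^L_χ`-modules. -/
theorem stmt15 (B : BaseAlgebra k H L) (U : UnitalDynAlgebra B A)
    (χ : L →ₐ[k] k) (hχ : B.IsInvChar χ) :
    ∀ (D : DynAlgebra B A), D = U.toDynAlgebra →
    -- `℘_χ` maps `B^L_χ` into `A^L_χ`
    (∀ p ∈ D.BLχ χ.toLinearMap,
      projR χ.toLinearMap p ∈ D.ALχ χ.toLinearMap) ∧
    -- surjectivity onto `A^L_χ`
    (∀ a ∈ D.ALχ χ.toLinearMap,
      ∃ p ∈ D.BLχ χ.toLinearMap, projR χ.toLinearMap p = a) ∧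
    -- `℘_χ` is an algebra homomorphism on `B^L_χ`
    (∀ p ∈ D.BLχ χ.toLinearMap, ∀ q ∈ D.BLχ χ.toLinearMap,
      projR χ.toLinearMap (D.smashMul (p ⊗ₜ[k] q)) =
        D.opStar χ.toLinearMap
          (projR χ.toLinearMap p ⊗ₜ[k] projR χ.toLinearMap q)) ∧
    -- `℘_χ` is `H`-equivariant
    (∀ (h : H) (p : A ⊗[k] L),
      projR χ.toLinearMap (D.actB (h ⊗ₜ[k] p)) =
        D.act h (projR χ.toLinearMap p)) ∧
    -- `℘_χ : B → A_χ` is a homomorphism of right `B^L_χ`-modules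
    (∀ (p : A ⊗[k] L), ∀ q ∈ D.BLχ χ.toLinearMap,
      projR χ.toLinearMap (D.smashMul (p ⊗ₜ[k] q)) =
        D.opStar χ.toLinearMap
          (projR χ.toLinearMap p ⊗ₜ[k] projR χ.toLinearMap q)) := by
  intro D _
  exact ⟨fun p hp => projR_mem_ALχ D hχ hp,
    fun a ha => ⟨a ⊗ₜ[k] 1, tmul_one_mem_BLχ D ha, by simp⟩,
    fun p _ q hq => projR_smashMul_of_mem_BLχ D hχ p hq,
    projR_actB D χ hχ,
    fun p q hq => projR_smashMul_of_mem_BLχ D hχ p hq⟩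

end Dyn
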